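/- Consequently, for any formula A, the sequent - | ⊢ A is derivable in LSkG if and only if ⊢ A (with empty tree antecedent - ⊢ A) is derivable in LSkT. -/

import Mathlib

/-- Formulae of left skew monoidal closed logic: atoms, unit I, ⊗, ⊸. -/
inductive Fma : Type
  | atom : ℕ → Fma
  | I : Fma
  | tens : Fma → Fma → Fma
  | lolli : Fma → Fma → Fma

/-- Derivability in the stoup sequent calculus LSkG: `GDer S Γ A` means `S | Γ ⊢ A`. -/
inductive GDer : Option Fma → List Fma → Fma → Prop
  | ax {A} : GDer (some A) [] A
  | lolliL {A B C Γ Δ} : GDer none Γ A → GDer (some B) Δ C →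
      GDer (some (Fma.lolli A B)) (Γ ++ Δ) C
  | IL {Γ C} : GDer none Γ C → GDer (some Fma.I) Γ C
  | tensL {A B Γ C} : GDer (some A) (B :: Γ) C → GDer (some (Fma.tens A B)) Γ C
  | pass {A Γ C} : GDer (some A) Γ C → GDer none (A :: Γ) C
  | lolliR {S Γ A B} : GDer S (Γ ++ [A]) B → GDer S Γ (Fma.lolli A B)
  | IR : GDer none [] Fma.I
  | tensR {S Γ Δ A B} : GDer S Γ A → GDer none Δ B → GDer S (Γ ++ Δ) (Fma.tens A B)

/-- Trees: formulae, the empty tree, and pairing. -/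
inductive Tr : Type
  | fma : Fma → Tr
  | emp : Tr
  | pair : Tr → Tr → Tr

/-- Contexts: trees with a single hole. -/
inductive Ctx : Type
  | hole : Ctx
  | pairL : Ctx → Tr → Ctx
  | pairR : Tr → Ctx → Ctx

/-- Substitution of a tree into the hole of a context. -/
def plug : Ctx → Tr → Tr
  | Ctx.hole, U => U
  | Ctx.pairL C T, U => Tr.pair (plug C U) T
  | Ctx.pairR T C, U => Tr.pair T (plug C U)

/-- Derivability in the tree sequent calculus LSkT: `TDer T A` means `T ⊢ A`. -/
inductive TDer : Tr → Fma → Prop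
  | ax {A} : TDer (Tr.fma A) A
  | IL {T C} : TDer (plug T Tr.emp) C → TDer (plug T (Tr.fma Fma.I)) C
  | IR : TDer Tr.emp Fma.I
  | tensL {T A B C} : TDer (plug T (Tr.pair (Tr.fma A) (Tr.fma B))) C →
      TDer (plug T (Tr.fma (Fma.tens A B))) C
  | tensR {T U A B} : TDer T A → TDer U B → TDer (Tr.pair T U) (Fma.tens A B)
  | lolliL {T U A B C} : TDer U A → TDer (plug T (Tr.fma B)) C →
      TDer (plug T (Tr.pair (Tr.fma (Fma.lolli A B)) U)) C
  | lolliR {T A B} : TDer (Tr.pair T (Tr.fma A)) B → TDer T (Fma.lolli A B)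
  | assoc {T U₀ U₁ U₂ C} : TDer (plug T (Tr.pair U₀ (Tr.pair U₁ U₂))) C →
      TDer (plug T (Tr.pair (Tr.pair U₀ U₁) U₂)) C
  | unitL {T U C} : TDer (plug T U) C → TDer (plug T (Tr.pair Tr.emp U)) C
  | unitR {T U C} : TDer (plug T (Tr.pair U Tr.emp)) C → TDer (plug T U) C

/-- `T*`: turn a tree into a formula, replacing commas with ⊗ and `-` with `I`. -/
def Tr.star : Tr → Fma
  | Tr.fma A => A
  | Tr.emp => Fma.I
  | Tr.pair T U => Fma.tens T.star U.star

/-!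
From LSkG to LSkT, a sequent `S | A₁, …, Aₙ ⊢ C` is read as the left comb
`((s, A₁), …), Aₙ ⊢ C`, where `s` is the stoup formula or the empty tree `-`. Each rule of
LSkG becomes a rule of LSkT applied inside the comb, and `assoc` and the unit
rules re-bracket the combs when two of them are joined.

From LSkT to LSkG, `T ⊢ C` becomes `T* | ⊢ C`. A rule of LSkT rewrites a subtree of `T` inside a
context, i.e. a subformula of `T*` nested in tensors. Inverting `⊗L` brings the left factor of a
tensor into the stoup and the right factor into the antecedent, so a rewrite that is valid in the
stoup is valid at any depth.

On the empty tree the two readings are `- | ⊢ A` and `I | ⊢ A`, which `IL` and its inverse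
identify.
-/

theorem GDer.IL_inv {Γ : List Fma} {C : Fma} (d : GDer (some .I) Γ C) : GDer none Γ C := by
  generalize hS : some Fma.I = S at d
  induction d with
  | ax => cases hS; exact .IR
  | IL f => exact f
  | lolliR _ ih => exact .lolliR (ih hS)
  | tensR _ g ih => exact .tensR (ih hS) g
  | _ => cases hS

theorem GDer.tensL_inv {A B C : Fma} {Γ : List Fma} (d : GDer (some (.tens A B)) Γ C) :
    GDer (some A) (B :: Γ) C := by
  generalize hS : some (Fma.tens A B) = S at d
  induction d with
  | ax => cases hS; exact .tensR (Γ := []) .ax (.pass .ax)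
  | tensL f => cases hS; exact f
  | lolliR _ ih => exact .lolliR (Γ := B :: _) (ih hS)
  | tensR _ g ih => exact .tensR (Γ := B :: _) (ih hS) g
  | _ => cases hS

theorem List.append_eq_append_cons_cases {α : Type*} {Γ Δ Δ₁ Δ₂ : List α} {X : α}
    (h : Γ ++ Δ = Δ₁ ++ X :: Δ₂) :
    (∃ c, Γ = Δ₁ ++ X :: c ∧ Δ₂ = c ++ Δ) ∨ ∃ a, Δ₁ = Γ ++ a ∧ Δ = a ++ X :: Δ₂ := by
  rcases List.append_eq_append_iff.mp h with ⟨a, h₁, h₂⟩ | ⟨_ | ⟨Y, c⟩, h₁, h₂⟩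
  · exact .inr ⟨a, h₁, h₂⟩
  · exact .inr ⟨[], by simpa using h₁.symm, h₂.symm⟩
  · obtain ⟨rfl, rfl⟩ := List.cons_eq_cons.mp h₂
    exact .inl ⟨c, h₁, rfl⟩

-- Only `pass` moves `X` from the antecedent into the stoup, and there `h` applies.
theorem GDer.replace_ctx {X : Fma} {ρ : List Fma}
    (h : ∀ Δ C, GDer (some X) Δ C → GDer none (ρ ++ Δ) C)
    {S : Option Fma} {Γ₁ Γ₂ : List Fma} {C : Fma} (d : GDer S (Γ₁ ++ X :: Γ₂) C) :
    GDer S (Γ₁ ++ ρ ++ Γ₂) C := by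
  generalize hΓ : Γ₁ ++ X :: Γ₂ = Γ at d
  induction d generalizing Γ₁ Γ₂ with
  | ax | IR => simp at hΓ
  | lolliL f g ihf ihg =>
    rcases List.append_eq_append_cons_cases hΓ.symm with ⟨c, rfl, rfl⟩ | ⟨a, rfl, rfl⟩
    · simpa using GDer.lolliL (ihf (Γ₂ := c) rfl) g
    · simpa using GDer.lolliL f (ihg (Γ₁ := a) rfl)
  | tensR f g ihf ihg =>
    rcases List.append_eq_append_cons_cases hΓ.symm with ⟨c, rfl, rfl⟩ | ⟨a, rfl, rfl⟩
    · simpa using GDer.tensR (ihf (Γ₂ := c) rfl) g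
    · simpa using GDer.tensR f (ihg (Γ₁ := a) rfl)
  | IL _ ih => exact .IL (ih hΓ)
  | tensL _ ih => exact .tensL (ih (Γ₁ := _ :: Γ₁) (by rw [← hΓ, List.cons_append]))
  | pass f ih =>
    rcases Γ₁ with _ | ⟨Y, Γ₁⟩
    · obtain ⟨rfl, rfl⟩ := List.cons_eq_cons.mp hΓ
      simpa using h _ _ f
    · obtain ⟨rfl, rfl⟩ := List.cons_eq_cons.mp hΓ.symm
      exact .pass (ih rfl)
  | lolliR _ ih =>
    subst hΓ
    exact .lolliR (by simpa using ih (Γ₂ := Γ₂ ++ [_]) (by simp))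

theorem GDer.replace_stoup_plug {U V : Tr}
    (h : ∀ Γ C, GDer (some U.star) Γ C → GDer (some V.star) Γ C) (T : Ctx) {Γ : List Fma}
    {C : Fma} (d : GDer (some (plug T U).star) Γ C) : GDer (some (plug T V).star) Γ C := by
  induction T generalizing Γ C with
  | hole => exact h _ _ d
  | pairL _ _ ih => exact .tensL (ih d.tensL_inv)
  | pairR _ _ ih =>
    have d' := d.tensL_inv.replace_ctx (Γ₁ := []) (ρ := [_]) (fun _ _ d' => .pass (ih d'))
    exact .tensL (by simpa using d')

theorem TDer.toGDer {T : Tr} {C : Fma} (d : TDer T C) : GDer (some T.star) [] C := by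
  induction d with
  | ax => exact .ax
  | IR => exact .IL .IR
  | IL _ ih => exact .replace_stoup_plug (U := .emp) (V := .fma .I) (fun _ _ d => d) _ ih
  | tensL _ ih =>
    exact .replace_stoup_plug (U := .pair (.fma _) (.fma _)) (V := .fma (.tens _ _))
      (fun _ _ d => d) _ ih
  | tensR _ _ ihf ihg => exact .tensL (.tensR (Γ := []) ihf (.pass ihg))
  | lolliR _ ih => exact .lolliR (Γ := []) ih.tensL_inv
  | lolliL f _ ihf ihg =>
    exact .replace_stoup_plug (U := .fma _) (V := .pair (.fma (.lolli _ _)) _)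
      (fun _ _ d => .tensL (.lolliL (Γ := [_]) (.pass ihf) d)) _ ihg
  | assoc _ ih =>
    refine .replace_stoup_plug (U := .pair _ (.pair _ _)) (V := .pair (.pair _ _) _)
      (fun _ _ d => ?_) _ ih
    have d' := d.tensL_inv.replace_ctx (Γ₁ := []) (ρ := [_, _])
      (fun _ _ d' => .pass d'.tensL_inv)
    exact .tensL (.tensL (by simpa using d'))
  | unitL _ ih =>
    exact .replace_stoup_plug (V := .pair .emp _) (fun _ _ d => .tensL (.IL (.pass d))) _ ih
  | unitR _ ih =>
    refine .replace_stoup_plug (U := .pair _ .emp) (fun _ _ d => ?_) _ ih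
    simpa using d.tensL_inv.replace_ctx (Γ₁ := []) (ρ := []) (fun _ _ d' => d'.IL_inv)

def Tr.comb (T : Tr) (Γ : List Fma) : Tr :=
  Γ.foldl (fun T A => T.pair (.fma A)) T

@[simp]
theorem Tr.comb_nil (T : Tr) : T.comb [] = T := rfl

@[simp]
theorem Tr.comb_cons (T : Tr) (A : Fma) (Γ : List Fma) :
    T.comb (A :: Γ) = (T.pair (.fma A)).comb Γ := rfl

@[simp]
theorem Tr.comb_append (T : Tr) (Γ Δ : List Fma) : T.comb (Γ ++ Δ) = (T.comb Γ).comb Δ :=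
  List.foldl_append

theorem Tr.exists_comb_eq_plug (Γ : List Fma) : ∃ E : Ctx, ∀ U, U.comb Γ = plug E U := by
  induction Γ using List.reverseRecOn with
  | nil => exact ⟨.hole, fun _ => rfl⟩
  | append_singleton Γ A ih =>
    obtain ⟨E, hE⟩ := ih
    exact ⟨.pairL E (.fma A), fun U => by simp [← hE, plug]⟩

theorem TDer.comb_of_forall_plug {X Y : Tr}
    (h : ∀ (E : Ctx) C, TDer (plug E X) C → TDer (plug E Y) C)
    (Γ : List Fma) {C : Fma} (d : TDer (X.comb Γ) C) : TDer (Y.comb Γ) C := by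
  obtain ⟨E, hE⟩ := Tr.exists_comb_eq_plug Γ
  rw [hE] at d ⊢
  exact h E C d

theorem TDer.comb_pair_comb {T U : Tr} {Δ Θ : List Fma} {C : Fma}
    (d : TDer ((T.pair (U.comb Δ)).comb Θ) C) : TDer (((T.pair U).comb Δ).comb Θ) C := by
  induction Δ generalizing U with
  | nil => exact d
  | cons A Δ ih =>
    have d' := TDer.comb_of_forall_plug (fun _ _ => TDer.assoc) (Δ ++ Θ) (by simpa using ih d)
    simpa using d'

def Tr.ofStoup : Option Fma → Tr
  | none => .emp
  | some A => .fma A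

theorem GDer.toTDer {S : Option Fma} {Γ : List Fma} {C : Fma} (d : GDer S Γ C) :
    TDer ((Tr.ofStoup S).comb Γ) C := by
  induction d with
  | ax => exact .ax
  | IR => exact .IR
  | IL _ ih => exact .comb_of_forall_plug (fun _ _ => TDer.IL) _ ih
  | tensL _ ih => exact .comb_of_forall_plug (fun _ _ => TDer.tensL) _ ih
  | pass _ ih => exact .comb_of_forall_plug (fun _ _ => TDer.unitL) _ ih
  | lolliR _ ih => exact .lolliR (by simpa using ih)
  | @lolliL _ _ _ Γ Δ _ _ ihf ihg =>
    have d := TDer.comb_pair_comb (TDer.comb_of_forall_plug (fun _ _ => TDer.lolliL ihf) _ ihg)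
    exact TDer.comb_of_forall_plug (X := .pair (.fma _) .emp) (fun _ _ => TDer.unitR) (Γ ++ Δ)
      (by simpa [Tr.ofStoup] using d)
  | tensR _ _ ihf ihg =>
    have d := TDer.comb_pair_comb (Θ := []) (TDer.tensR ihf ihg)
    simpa using TDer.comb_of_forall_plug (X := .pair _ .emp) (fun _ _ => TDer.unitR) _
      (by simpa [Tr.ofStoup] using d)

/-- Formula derivability agrees: `- | ⊢ A` in LSkG iff `- ⊢ A` in LSkT. -/
theorem empty_derivable_iff (A : Fma) : GDer none [] A ↔ TDer Tr.emp A :=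
  ⟨GDer.toTDer, fun d => d.toGDer.IL_inv⟩
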